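/- Let f : P_m → P_n be holomorphic. Then for every z ∈ P_m and v ∈ C^m, F̃_{t̃,k̃}^2(f(z); df(z)v) ≤ ((n + t̃ n^{1/k̃})/(1+t̃)) · F_{t,k}^2(z; v), where F_{t,k}^2(z;v) = (1/(1+t))( Σ_{l=1}^m |v^l|^2/(1-|z^l|^2)^2 + t ( Σ_{l=1}^m |v^l|^{2k}/(1-|z^l|^2)^{2k} )^{1/k} ) and F̃_{t̃,k̃} is defined analogously on P_n. -/

import Mathlib

def polydisc (m : ℕ) : Set (Fin m → ℂ) := {z | ∀ l, ‖z l‖ < 1}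

noncomputable def FSq (m : ℕ) (t : ℝ) (k : ℕ) (z v : Fin m → ℂ) : ℝ :=
  (1/(1+t)) * (∑ l, ‖v l‖^2 / (1 - ‖z l‖^2)^2
    + t * (∑ l, ‖v l‖^(2*k) / (1 - ‖z l‖^2)^(2*k)) ^ ((1:ℝ)/k))


/-!
Both metrics are comparable to the infinitesimal Carathéodory–Kobayashi metric of the polydisc,
`μ(z; v) = max_l |v^l| / (1 - |z^l|²)`: keeping the largest term of each sum gives
`μ² ≤ F²_{t,k}`, and bounding every term by `μ` gives `F²_{t,k} ≤ ((m + t m^{1/k}) / (1 + t)) μ²`.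
The theorem follows since holomorphic maps of polydiscs contract `μ`. For this, `f` is composed
with a holomorphic disc through `z` tangent to `v` whose coordinates are Möbius maps; each
coordinate of the composite is a holomorphic self-map of the unit disc, to which the Schwarz–Pick
lemma `|g'(0)| ≤ 1 - |g(0)|²` applies. That in turn is the Schwarz lemma for `g` followed by the
disc automorphism sending `g(0)` to `0`.
-/

open Metric Set ComplexConjugate

namespace Complex

lemma normSq_one_sub_conj_mul_sub_normSq_sub (a w : ℂ) :
    normSq (1 - conj a * w) - normSq (w - a) = (1 - normSq a) * (1 - normSq w) := by
  simp only [normSq_apply, sub_re, sub_im, mul_re, mul_im, one_re, one_im, conj_re, conj_im]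
  ring

lemma normSq_sub_lt_normSq_one_sub_conj_mul {a w : ℂ} (ha : ‖a‖ < 1) (hw : ‖w‖ < 1) :
    normSq (w - a) < normSq (1 - conj a * w) := by
  have hkey := normSq_one_sub_conj_mul_sub_normSq_sub a w
  have ha' : normSq a < 1 := by rw [normSq_eq_norm_sq]; nlinarith [norm_nonneg a]
  have hw' : normSq w < 1 := by rw [normSq_eq_norm_sq]; nlinarith [norm_nonneg w]
  nlinarith

end Complex

lemma one_sub_conj_mul_ne_zero {a w : ℂ} (ha : ‖a‖ < 1) (hw : ‖w‖ < 1) :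
    1 - conj a * w ≠ 0 := by
  intro h
  have hlt := Complex.normSq_sub_lt_normSq_one_sub_conj_mul ha hw
  rw [h, map_zero] at hlt
  exact (Complex.normSq_nonneg _).not_gt hlt

/-- The automorphism of the unit disc exchanging `a` and `0`. -/
noncomputable def discMobius (a w : ℂ) : ℂ := (w - a) / (1 - conj a * w)

@[simp]
lemma discMobius_self (a : ℂ) : discMobius a a = 0 := by
  simp [discMobius]

@[simp]
lemma discMobius_neg_zero (a : ℂ) : discMobius (-a) 0 = a := by
  simp [discMobius]

lemma norm_discMobius_lt_one {a w : ℂ} (ha : ‖a‖ < 1) (hw : ‖w‖ < 1) :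
    ‖discMobius a w‖ < 1 := by
  rw [discMobius, norm_div, div_lt_one (norm_pos_iff.2 (one_sub_conj_mul_ne_zero ha hw)),
    Complex.norm_def, Complex.norm_def]
  exact Real.sqrt_lt_sqrt (Complex.normSq_nonneg _)
    (Complex.normSq_sub_lt_normSq_one_sub_conj_mul ha hw)

lemma mapsTo_discMobius {a : ℂ} (ha : ‖a‖ < 1) : MapsTo (discMobius a) (ball 0 1) (ball 0 1) :=
  fun _ hw => mem_ball_zero_iff.2 (norm_discMobius_lt_one ha (mem_ball_zero_iff.1 hw))

lemma hasDerivAt_discMobius {a w : ℂ} (hw : 1 - conj a * w ≠ 0) :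
    HasDerivAt (discMobius a) ((1 - ‖a‖ ^ 2) / (1 - conj a * w) ^ 2) w := by
  have hnum := (hasDerivAt_id w).sub_const a
  have hden := ((hasDerivAt_id w).const_mul (conj a)).const_sub 1
  refine (hnum.div hden hw).congr_deriv ?_
  rw [← Complex.conj_mul']
  simp only [id, mul_one]
  ring

lemma differentiableOn_discMobius {a : ℂ} (ha : ‖a‖ < 1) :
    DifferentiableOn ℂ (discMobius a) (ball 0 1) := fun _ hw =>
  (hasDerivAt_discMobius (one_sub_conj_mul_ne_zero ha (mem_ball_zero_iff.1 hw)))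
    |>.differentiableAt.differentiableWithinAt

lemma norm_le_one_sub_sq_of_hasDerivAt_zero {g : ℂ → ℂ} {d : ℂ}
    (hd : DifferentiableOn ℂ g (ball 0 1)) (hg : MapsTo g (ball 0 1) (ball 0 1))
    (hder : HasDerivAt g d 0) : ‖d‖ ≤ 1 - ‖g 0‖ ^ 2 := by
  set b := g 0
  have hb : ‖b‖ < 1 := mem_ball_zero_iff.1 (hg (mem_ball_self one_pos))
  have hpos : 0 < 1 - ‖b‖ ^ 2 := by nlinarith [norm_nonneg b]
  have hbb : 1 - conj b * b = ((1 - ‖b‖ ^ 2 : ℝ) : ℂ) := by push_cast; rw [Complex.conj_mul']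
  have hh : HasDerivAt (discMobius b ∘ g) (d / ((1 - ‖b‖ ^ 2 : ℝ) : ℂ)) 0 := by
    refine ((hasDerivAt_discMobius (one_sub_conj_mul_ne_zero hb hb)).comp 0 hder).congr_deriv ?_
    rw [hbb]
    have : ((1 - ‖b‖ ^ 2 : ℝ) : ℂ) ≠ 0 := by exact_mod_cast hpos.ne'
    push_cast at this ⊢
    field_simp
  have hmaps : MapsTo (discMobius b ∘ g) (ball 0 1) (closedBall (discMobius b (g 0)) 1) := by
    rw [discMobius_self]
    exact ((mapsTo_discMobius hb).comp hg).mono_right ball_subset_closedBall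
  have schwarz := Complex.norm_deriv_le_one_of_mapsTo_ball
    ((differentiableOn_discMobius hb).comp hd hg) hmaps one_pos
  rwa [hh.deriv, norm_div, Complex.norm_real, Real.norm_of_nonneg hpos.le,
    div_le_one hpos] at schwarz

lemma isOpen_polydisc (m : ℕ) : IsOpen (polydisc m) := by
  have : polydisc m = univ.pi fun _ => ball (0 : ℂ) 1 := by
    ext z; simp [polydisc]
  rw [this]
  exact isOpen_set_pi finite_univ fun _ _ => isOpen_ball

lemma one_sub_sq_norm_pos_of_mem_polydisc {m : ℕ} {z : Fin m → ℂ} (hz : z ∈ polydisc m)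
    (l : Fin m) : 0 < 1 - ‖z l‖ ^ 2 := by
  nlinarith [hz l, norm_nonneg (z l)]

lemma norm_fderiv_apply_le_of_mapsTo_polydisc {m n : ℕ} {f : (Fin m → ℂ) → (Fin n → ℂ)}
    (hf : DifferentiableOn ℂ f (polydisc m)) (hmaps : MapsTo f (polydisc m) (polydisc n))
    {z v : Fin m → ℂ} (hz : z ∈ polydisc m) (hv : ∀ l, ‖v l‖ ≤ 1 - ‖z l‖ ^ 2) (j : Fin n) :
    ‖fderiv ℂ f z v j‖ ≤ 1 - ‖f z j‖ ^ 2 := by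
  set c : Fin m → ℂ := fun l => v l / ((1 - ‖z l‖ ^ 2 : ℝ) : ℂ)
  have hc : ∀ l, ‖c l‖ ≤ 1 := fun l => by
    have hpos := one_sub_sq_norm_pos_of_mem_polydisc hz l
    rw [norm_div, Complex.norm_real, Real.norm_of_nonneg hpos.le, div_le_one hpos]
    exact hv l
  have hcw : ∀ l, ∀ w ∈ ball (0 : ℂ) 1, ‖c l * w‖ < 1 := fun l w hw => by
    rw [norm_mul]
    exact lt_of_le_of_lt (mul_le_of_le_one_left (norm_nonneg w) (hc l)) (mem_ball_zero_iff.1 hw)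
  set φ : ℂ → Fin m → ℂ := fun w l => discMobius (-z l) (c l * w)
  have hφmaps : MapsTo φ (ball 0 1) (polydisc m) := fun w hw l =>
    norm_discMobius_lt_one (by simpa using hz l) (hcw l w hw)
  have hφdiff : DifferentiableOn ℂ φ (ball 0 1) := differentiableOn_pi.2 fun l =>
    (differentiableOn_discMobius (by simpa using hz l)).comp
      (differentiableOn_id.const_mul (c l)) fun w hw => mem_ball_zero_iff.2 (hcw l w hw)
  have hφ0 : φ 0 = z := by
    funext l; simp [φ]
  have hφder : HasDerivAt φ v 0 := hasDerivAt_pi.2 fun l => by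
    have hden : (1 : ℂ) - conj (-z l) * (c l * 0) ≠ 0 := by simp
    refine ((hasDerivAt_discMobius hden).comp 0
      ((hasDerivAt_id (0 : ℂ)).const_mul (c l))).congr_deriv ?_
    have hne : ((1 - ‖z l‖ ^ 2 : ℝ) : ℂ) ≠ 0 := by
      exact_mod_cast (one_sub_sq_norm_pos_of_mem_polydisc hz l).ne'
    simp only [c, mul_zero, sub_zero, one_pow, div_one, norm_neg, mul_one]
    push_cast at hne ⊢
    field_simp
  have hfz : HasFDerivAt f (fderiv ℂ f z) (φ 0) := by
    rw [hφ0]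
    exact (hf.differentiableAt ((isOpen_polydisc m).mem_nhds hz)).hasFDerivAt
  have hcomp : HasDerivAt (fun w => f (φ w) j) (fderiv ℂ f z v j) 0 :=
    hasDerivAt_pi.1 (hfz.comp_hasDerivAt 0 hφder) j
  have hsp := norm_le_one_sub_sq_of_hasDerivAt_zero
    (differentiableOn_pi.1 (hf.comp hφdiff hφmaps) j)
    (fun w hw => mem_ball_zero_iff.2 (hmaps (hφmaps hw) j)) hcomp
  rwa [Function.comp_apply, hφ0] at hsp

/-- The infinitesimal Carathéodory–Kobayashi metric of the polydisc. -/
noncomputable def polydiscNorm {m : ℕ} (z v : Fin m → ℂ) : ℝ :=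
  ⨆ l, ‖v l‖ / (1 - ‖z l‖ ^ 2)

section polydiscNorm

variable {m : ℕ} {z v : Fin m → ℂ}

lemma div_le_polydiscNorm (l : Fin m) : ‖v l‖ / (1 - ‖z l‖ ^ 2) ≤ polydiscNorm z v :=
  le_ciSup (f := fun l => ‖v l‖ / (1 - ‖z l‖ ^ 2)) (Finite.bddAbove_range _) l

lemma div_nonneg_of_mem_polydisc (hz : z ∈ polydisc m) (l : Fin m) :
    0 ≤ ‖v l‖ / (1 - ‖z l‖ ^ 2) :=
  div_nonneg (norm_nonneg _) (one_sub_sq_norm_pos_of_mem_polydisc hz l).le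

lemma polydiscNorm_nonneg (hz : z ∈ polydisc m) : 0 ≤ polydiscNorm z v :=
  Real.iSup_nonneg (div_nonneg_of_mem_polydisc hz)

lemma polydiscNorm_fderiv_le {n : ℕ} {f : (Fin m → ℂ) → (Fin n → ℂ)}
    (hf : DifferentiableOn ℂ f (polydisc m)) (hmaps : MapsTo f (polydisc m) (polydisc n))
    (hz : z ∈ polydisc m) : polydiscNorm (f z) (fderiv ℂ f z v) ≤ polydiscNorm z v := by
  -- `μ(z; v)` may vanish, so rescale `v` by `(μ(z; v) + ε)⁻¹` instead
  refine Real.iSup_le (fun j => le_of_forall_pos_le_add fun ε hε => ?_) (polydiscNorm_nonneg hz)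
  set M := polydiscNorm z v + ε
  have hM : 0 < M := by linarith [polydiscNorm_nonneg (v := v) hz]
  have hv : ∀ l, ‖(M⁻¹ • v) l‖ ≤ 1 - ‖z l‖ ^ 2 := fun l => by
    have hpos := one_sub_sq_norm_pos_of_mem_polydisc hz l
    have hl : ‖v l‖ / (1 - ‖z l‖ ^ 2) ≤ M := by linarith [div_le_polydiscNorm (v := v) (z := z) l]
    rw [Pi.smul_apply, norm_smul, norm_inv, Real.norm_of_nonneg hM.le, inv_mul_le_iff₀ hM]
    rwa [div_le_iff₀ hpos] at hl
  have hj := norm_fderiv_apply_le_of_mapsTo_polydisc hf hmaps hz hv j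
  rw [(fderiv ℂ f z).map_smul_of_tower, Pi.smul_apply, norm_smul, norm_inv,
    Real.norm_of_nonneg hM.le, inv_mul_le_iff₀ hM] at hj
  rwa [div_le_iff₀ (one_sub_sq_norm_pos_of_mem_polydisc (hmaps hz) j)]

end polydiscNorm

lemma pow_two_mul_rpow_one_div (x : ℝ) {k : ℕ} (hk : k ≠ 0) :
    (x ^ (2 * k)) ^ ((1 : ℝ) / k) = x ^ 2 := by
  rw [pow_mul, one_div, Real.pow_rpow_inv_natCast (by positivity) hk]

section FSq

variable {m : ℕ} {t : ℝ} {k : ℕ} {z v : Fin m → ℂ}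

lemma FSq_eq_div_pow (m : ℕ) (t : ℝ) (k : ℕ) (z v : Fin m → ℂ) :
    FSq m t k z v = (1 / (1 + t)) * (∑ l, (‖v l‖ / (1 - ‖z l‖ ^ 2)) ^ 2
      + t * (∑ l, (‖v l‖ / (1 - ‖z l‖ ^ 2)) ^ (2 * k)) ^ ((1 : ℝ) / k)) := by
  simp only [FSq, div_pow]

lemma FSq_le_mul_sq_polydiscNorm (hz : z ∈ polydisc m) (ht : 0 ≤ t) (hk : k ≠ 0) :
    FSq m t k z v ≤ ((m + t * (m : ℝ) ^ ((1 : ℝ) / k)) / (1 + t)) * polydiscNorm z v ^ 2 := by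
  set M := polydiscNorm z v
  have hM := polydiscNorm_nonneg (v := v) hz
  have hterm : ∀ p : ℕ, ∑ l, (‖v l‖ / (1 - ‖z l‖ ^ 2)) ^ p ≤ m * M ^ p := fun p => by
    calc ∑ l, (‖v l‖ / (1 - ‖z l‖ ^ 2)) ^ p ≤ ∑ _l : Fin m, M ^ p :=
          Finset.sum_le_sum fun l _ =>
            pow_le_pow_left₀ (div_nonneg_of_mem_polydisc hz l) (div_le_polydiscNorm l) p
      _ = m * M ^ p := by simp
  have hrpow : (∑ l, (‖v l‖ / (1 - ‖z l‖ ^ 2)) ^ (2 * k)) ^ ((1 : ℝ) / k)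
      ≤ (m : ℝ) ^ ((1 : ℝ) / k) * M ^ 2 := by
    calc _ ≤ ((m : ℝ) * M ^ (2 * k)) ^ ((1 : ℝ) / k) :=
          Real.rpow_le_rpow (Finset.sum_nonneg fun l _ => pow_nonneg
            (div_nonneg_of_mem_polydisc hz l) _) (hterm _) (by positivity)
      _ = (m : ℝ) ^ ((1 : ℝ) / k) * M ^ 2 := by
          rw [Real.mul_rpow (Nat.cast_nonneg m) (by positivity), pow_two_mul_rpow_one_div M hk]
  rw [FSq_eq_div_pow]
  calc _ ≤ 1 / (1 + t) * (m * M ^ 2 + t * ((m : ℝ) ^ ((1 : ℝ) / k) * M ^ 2)) := by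
        gcongr
        exact hterm 2
    _ = _ := by ring

lemma sq_div_le_FSq (hz : z ∈ polydisc m) (ht : 0 ≤ t) (hk : k ≠ 0) (l : Fin m) :
    (‖v l‖ / (1 - ‖z l‖ ^ 2)) ^ 2 ≤ FSq m t k z v := by
  set r := fun l => ‖v l‖ / (1 - ‖z l‖ ^ 2)
  have hr : ∀ l, 0 ≤ r l := div_nonneg_of_mem_polydisc hz
  have hsum : r l ^ 2 ≤ ∑ l, r l ^ 2 :=
    Finset.single_le_sum (fun l _ => pow_nonneg (hr l) 2) (Finset.mem_univ l)
  have hrpow : r l ^ 2 ≤ (∑ l, r l ^ (2 * k)) ^ ((1 : ℝ) / k) := by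
    rw [← pow_two_mul_rpow_one_div (r l) hk]
    exact Real.rpow_le_rpow (pow_nonneg (hr l) _)
      (Finset.single_le_sum (fun l _ => pow_nonneg (hr l) _) (Finset.mem_univ l)) (by positivity)
  rw [FSq_eq_div_pow, div_mul_eq_mul_div, one_mul, le_div_iff₀ (by linarith)]
  nlinarith

lemma FSq_nonneg (hz : z ∈ polydisc m) (ht : 0 ≤ t) : 0 ≤ FSq m t k z v := by
  have hr := div_nonneg_of_mem_polydisc (v := v) hz
  rw [FSq_eq_div_pow]
  exact mul_nonneg (by positivity) (add_nonneg (Finset.sum_nonneg fun l _ => pow_nonneg (hr l) 2)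
    (mul_nonneg ht (Real.rpow_nonneg (Finset.sum_nonneg fun l _ => pow_nonneg (hr l) _) _)))

lemma sq_polydiscNorm_le_FSq (hz : z ∈ polydisc m) (ht : 0 ≤ t) (hk : k ≠ 0) :
    polydiscNorm z v ^ 2 ≤ FSq m t k z v := by
  refine (Real.le_sqrt (polydiscNorm_nonneg hz) (FSq_nonneg hz ht)).1 ?_
  exact Real.iSup_le (fun l => Real.le_sqrt_of_sq_le (sq_div_le_FSq hz ht hk l))
    (Real.sqrt_nonneg _)

end FSq

/-- Schwarz lemma for the Kähler-Berwald metrics: for any holomorphic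
`f : P_m → P_n`, `F̃²_{t̃,k̃}(f(z); df(z)v) ≤ ((n + t̃ n^{1/k̃})/(1+t̃)) F²_{t,k}(z;v)`. -/
theorem schwarz_FSq (m n : ℕ) (t tt : ℝ) (ht : 0 ≤ t) (htt : 0 ≤ tt)
    (k kt : ℕ) (hk : 2 ≤ k) (hkt : 2 ≤ kt)
    (f : (Fin m → ℂ) → (Fin n → ℂ))
    (hf : DifferentiableOn ℂ f (polydisc m))
    (hmaps : ∀ z ∈ polydisc m, f z ∈ polydisc n) :
    ∀ z ∈ polydisc m, ∀ v : Fin m → ℂ,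
      FSq n tt kt (f z) (fderiv ℂ f z v)
        ≤ ((n + tt * (n:ℝ) ^ ((1:ℝ)/kt))/(1+tt)) * FSq m t k z v := by
  intro z hz v
  have hfz : f z ∈ polydisc n := hmaps z hz
  calc FSq n tt kt (f z) (fderiv ℂ f z v)
      ≤ ((n + tt * (n:ℝ) ^ ((1:ℝ)/kt))/(1+tt)) * polydiscNorm (f z) (fderiv ℂ f z v) ^ 2 :=
        FSq_le_mul_sq_polydiscNorm hfz htt (by omega)
    _ ≤ ((n + tt * (n:ℝ) ^ ((1:ℝ)/kt))/(1+tt)) * polydiscNorm z v ^ 2 := by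
        gcongr
        · exact polydiscNorm_nonneg hfz
        · exact polydiscNorm_fderiv_le hf hmaps hz
    _ ≤ ((n + tt * (n:ℝ) ^ ((1:ℝ)/kt))/(1+tt)) * FSq m t k z v := by
        gcongr
        exact sq_polydiscNorm_le_FSq hz ht (by omega)
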